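/- Let A be a unital associative ℂ-algebra with a star operation, Θ : A ≃ₐ[ℂ] A an algebra automorphism with Θ(Θ x) = x and Θ(star x) = star(Θ x) for all x, and call x odd if Θ x = −x. Let A₁, A₂ be star-closed ℂ-subalgebras of A such that every odd element of A₁ anticommutes with every odd element of A₂. Let ω be a hermitian ℂ-linear functional admitting a separable decomposition: there are finitely many reals λ_k ≥ 0 with ∑_k λ_k = 1 and hermitian ℂ-linear functionals ω_k¹, ω_k² on A such that ω(x*y) = ∑_k λ_k · ω_k¹(x) · ω_k²(y) for all x ∈ A₁ and y ∈ A₂. Then ω(x*y) = 0 for every odd x ∈ A₁ and every odd y ∈ A₂. -/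
import Mathlib


open scoped BigOperators

/-- paper's Corollary 1, contrapositive: a hermitian functional
admitting a separable decomposition over a fermionic bipartition vanishes on
every local operator whose two factors are both odd. -/
theorem separable_state_vanishes_on_odd_odd_local_operators
    {A : Type*} [Ring A] [Algebra ℂ A] [StarRing A] [StarModule ℂ A]
    (Θ : A ≃ₐ[ℂ] A) (hΘ2 : ∀ x : A, Θ (Θ x) = x)
    (hΘstar : ∀ x : A, Θ (star x) = star (Θ x))
    (A₁ A₂ : Subalgebra ℂ A)
    (hstar₁ : ∀ x ∈ A₁, star x ∈ A₁) (hstar₂ : ∀ y ∈ A₂, star y ∈ A₂)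
    (hanti : ∀ x ∈ A₁, ∀ y ∈ A₂, Θ x = -x → Θ y = -y → x * y + y * x = 0)
    (ω : A →ₗ[ℂ] ℂ) (hω : ∀ x : A, ω (star x) = starRingEnd ℂ (ω x))
    (K : Type*) [Fintype K] (lam : K → ℝ)
    (hlam : ∀ k, 0 ≤ lam k) (hlamsum : ∑ k, lam k = 1)
    (ω₁ ω₂ : K → (A →ₗ[ℂ] ℂ))
    (hω₁ : ∀ k, ∀ x : A, ω₁ k (star x) = starRingEnd ℂ (ω₁ k x))
    (hω₂ : ∀ k, ∀ x : A, ω₂ k (star x) = starRingEnd ℂ (ω₂ k x))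
    (hsep : ∀ x ∈ A₁, ∀ y ∈ A₂, ω (x * y) = ∑ k, (lam k : ℂ) * ω₁ k x * ω₂ k y) :
    ∀ x ∈ A₁, ∀ y ∈ A₂, Θ x = -x → Θ y = -y → ω (x * y) = 0 := by
  intro x hx y hy hox hoy
  have hx' : star x ∈ A₁ := hstar₁ x hx
  have hy' : star y ∈ A₂ := hstar₂ y hy
  have hox' : Θ (star x) = -(star x) := by rw [hΘstar, hox, star_neg]
  have hoy' : Θ (star y) = -(star y) := by rw [hΘstar, hoy, star_neg]
  have hac := hanti (star x) hx' (star y) hy' hox' hoy'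
  have hstar_eq : star (x * y) = -(star x * star y) := by
    rw [star_mul]
    exact eq_neg_of_add_eq_zero_right hac
  have key : starRingEnd ℂ (ω (x * y)) = - starRingEnd ℂ (ω (x * y)) := by
    calc starRingEnd ℂ (ω (x * y)) = ω (star (x * y)) := (hω _).symm
      _ = - ω (star x * star y) := by rw [hstar_eq, map_neg]
      _ = - ∑ k, (lam k : ℂ) * ω₁ k (star x) * ω₂ k (star y) := by
          rw [hsep _ hx' _ hy']
      _ = - starRingEnd ℂ (∑ k, (lam k : ℂ) * ω₁ k x * ω₂ k y) := by
          congr 1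
          rw [map_sum]
          refine Finset.sum_congr rfl fun k _ => ?_
          rw [hω₁, hω₂, map_mul, map_mul, Complex.conj_ofReal]
      _ = - starRingEnd ℂ (ω (x * y)) := by rw [hsep x hx y hy]
  have h0 : starRingEnd ℂ (ω (x * y)) = 0 := by linear_combination key / 2
  simpa using congrArg (starRingEnd ℂ) h0
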